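/- arXiv:2102.06055 — 2 statements merged into one kernel-verified Lean document; each statement's English description precedes it below -/
import Mathlib

section
/- Let (ϖ_k)_{k≥1} and (ϖ'_k)_{k≥1} be non-increasing sequences of integers such that for every α ∈ ℤ the sets {k : ϖ_k ≥ α} and {k : ϖ'_k ≥ α} are finite. If Σ_{k : ϖ_k ≥ α} (ϖ_k − α) ≤ Σ_{k : ϖ'_k ≥ α} (ϖ'_k − α) for every α ∈ ℤ, then Σ_{k=1}^i ϖ_k ≤ Σ_{k=1}^i ϖ'_k for every i ≥ 1. -/
open scoped Classical

noncomputable section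

/-- A partition: an antitone, eventually zero sequence of natural numbers.
`parts k` is the `(k+1)`-st part `λ_{k+1}`. -/
structure Partition' where
  parts : ℕ → ℕ
  antitone' : Antitone parts
  exists_zero : ∃ N, parts N = 0

namespace Partition'

lemma sorted_getD_antitone {l : List ℕ} (h : l.Pairwise (· ≥ ·)) :
    Antitone (fun k => l.getD k 0) := by
  intro i j hij
  simp only
  rcases lt_or_ge j l.length with hj | hj
  · have hi : i < l.length := lt_of_le_of_lt hij hj
    rw [List.getD_eq_getElem l 0 hj, List.getD_eq_getElem l 0 hi]
    rcases eq_or_lt_of_le hij with rfl | hlt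
    · exact le_rfl
    · exact List.pairwise_iff_getElem.mp h i j hi hj hlt
  · rw [List.getD_eq_default l 0 hj]
    exact Nat.zero_le _

/-- The partition whose multiset of (nonzero) parts is the multiset of nonzero
elements of `m`. -/
def ofMul (m : Multiset ℕ) : Partition' where
  parts := fun k => ((m.sort (· ≤ ·)).reverse).getD k 0
  antitone' := by
    apply sorted_getD_antitone
    rw [List.pairwise_reverse]
    exact Multiset.pairwise_sort (r := (· ≤ ·)) (s := m)
  exists_zero := ⟨((m.sort (· ≤ ·)).reverse).length, List.getD_eq_default _ _ le_rfl⟩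

/-- The size `|λ|` of a partition: the sum of its parts. -/
def size (p : Partition') : ℕ := ∑ i ∈ Finset.range (Nat.find p.exists_zero), p.parts i

lemma finite_gt (p : Partition') (k : ℕ) : {i : ℕ | k < p.parts i}.Finite := by
  obtain ⟨N, hN⟩ := p.exists_zero
  apply (Set.finite_Iio N).subset
  intro i hi
  simp only [Set.mem_setOf_eq] at hi
  by_contra hc
  simp only [Set.mem_Iio, not_lt] at hc
  have := p.antitone' hc
  omega

/-- The conjugate (transpose) partition. -/
def conj (p : Partition') : Partition' where
  parts := fun k => {i : ℕ | k < p.parts i}.ncard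
  antitone' := fun a b hab =>
    Set.ncard_le_ncard (fun i hi => lt_of_le_of_lt hab hi) (p.finite_gt a)
  exists_zero := by
    refine ⟨p.parts 0, ?_⟩
    have h : {i : ℕ | p.parts 0 < p.parts i} = ∅ := by
      ext i
      simp only [Set.mem_setOf_eq, Set.mem_empty_iff_false, iff_false, not_lt]
      exact p.antitone' (Nat.zero_le i)
    show {i : ℕ | p.parts 0 < p.parts i}.ncard = 0
    rw [h, Set.ncard_empty]

/-- The 180°-rotation of the complement of `p` inside the rectangle with
`rows` rows of length `c`: the partition `(c - p_rows, c - p_{rows-1}, …, c - p₁)`. -/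
def rotCompl (c rows : ℕ) (p : Partition') : Partition' where
  parts := fun k => if k < rows then c - p.parts (rows - 1 - k) else 0
  antitone' := by
    intro a b hab
    by_cases hb : b < rows
    · have ha : a < rows := lt_of_le_of_lt hab hb
      simp only [if_pos hb, if_pos ha]
      exact Nat.sub_le_sub_left (p.antitone' (by omega)) c
    · simp only [if_neg hb]
      exact Nat.zero_le _
  exists_zero := ⟨rows, by simp⟩

end Partition'

/-- A bipartition: a pair of partitions. -/
abbrev Bipartition := Partition' × Partition'

/-- The size of a bipartition. -/
def Bipartition.size (l : Bipartition) : ℕ := l.1.size + l.2.size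

/-- The bipartition whose components have parts the multisets `a` and `b`. -/
def bip (a b : Multiset ℕ) : Bipartition := (Partition'.ofMul a, Partition'.ofMul b)

/-- The multiset of parts of the partition `a 1^b` (one part `a`, then `b` parts `1`). -/
def hook (a b : ℕ) : Multiset ℕ := a ::ₘ Multiset.replicate b 1

/-- The charged β-set of a partition, as a sequence:
`betaSet p s i = λ_{i+1} + s - (i+1) + 1`. -/
def betaSet (p : Partition') (s : ℤ) (i : ℕ) : ℤ := (p.parts i : ℤ) + s - i

/-- The charged symbol of a bipartition with charge `σ`, as a pair of subsets of `ℤ`. -/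
def symbolOf (l : Bipartition) (σ : ℤ × ℤ) : Set ℤ × Set ℤ :=
  (Set.range (betaSet l.1 σ.1), Set.range (betaSet l.2 σ.2))

/-- The charge `σ_t`. -/
def sigmaT (t : ℕ) : ℤ × ℤ :=
  if Even t then ((t : ℤ), -1 - (t : ℤ)) else (-1 - (t : ℤ), (t : ℤ))

/-- The trivial symbol `({0,-1,-2,…},{-1,-2,-3,…})`, the symbol of the empty
bipartition with charge `σ₀ = (0,-1)`. -/
def trivialSymbol : Set ℤ × Set ℤ := ({z : ℤ | z ≤ 0}, {z : ℤ | z ≤ -1})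

/-- Removing one `n`-co-hook from the symbol `Λ`, yielding `Λ'`: remove `x+n` from one
row, adjoin `x` to the other row, and exchange the two rows. -/
def CohookStep (n : ℕ) (Λ Λ' : Set ℤ × Set ℤ) : Prop :=
  (∃ x : ℤ, x + n ∈ Λ.1 ∧ x ∉ Λ.2 ∧ Λ' = (Λ.2 ∪ {x}, Λ.1 \ {x + n})) ∨
  (∃ x : ℤ, x + n ∈ Λ.2 ∧ x ∉ Λ.1 ∧ Λ' = (Λ.2 \ {x + n}, Λ.1 ∪ {x}))

/-- `C` is the `n`-co-core of `Λ`: it is obtained from `Λ` by recursively removing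
`n`-co-hooks, and no further `n`-co-hook can be removed. -/
def IsCocore (n : ℕ) (Λ C : Set ℤ × Set ℤ) : Prop :=
  Relation.ReflTransGen (CohookStep n) Λ C ∧ ∀ C', ¬ CohookStep n C C'

/-- Number of entries of the charged β-set of `p` that are `≥ α` (with multiplicity). -/
def betaCountGE (p : Partition') (s α : ℤ) : ℕ := Nat.card {i : ℕ // α ≤ betaSet p s i}

/-- Number of entries `≥ α`, with multiplicity, of the multiset union of the two rows
of the symbol of `l` with charge `σ`. -/
def symCountGE (l : Bipartition) (σ : ℤ × ℤ) (α : ℤ) : ℕ :=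
  betaCountGE l.1 σ.1 α + betaCountGE l.2 σ.2 α

/-- The composition `ϖ_Λ` of the symbol of `l` with charge `σ`: `comp l σ k` is the
`(k+1)`-st largest entry (with multiplicity) of the multiset union of the two rows. -/
def comp (l : Bipartition) (σ : ℤ × ℤ) (k : ℕ) : ℤ :=
  sSup {z : ℤ | k + 1 ≤ symCountGE l σ z}

/-- All partial sums of the composition of the symbol `(l,σ)` are bounded by those of
`(m,τ)`. -/
def DomLE (l : Bipartition) (σ : ℤ × ℤ) (m : Bipartition) (τ : ℤ × ℤ) : Prop :=
  ∀ j : ℕ, ∑ k ∈ Finset.range j, comp l σ k ≤ ∑ k ∈ Finset.range j, comp m τ k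

/-- Strict dominance `Λ ⊲ Λ'` of symbols: the compositions differ and all partial sums
of the first are bounded by those of the second. -/
def DomLT (l : Bipartition) (σ : ℤ × ℤ) (m : Bipartition) (τ : ℤ × ℤ) : Prop :=
  comp l σ ≠ comp m τ ∧ DomLE l σ m τ

/-- A box `(x, y, j)` (0-indexed row `x`, 0-indexed column `y`, component `j`:
`j = 0` is the first component, `j = 1` the second). -/
abbrev Box := ℕ × ℕ × Fin 2

/-- The component of a bipartition selected by `j : Fin 2`. -/
def Bipartition.partsOf (l : Bipartition) (j : Fin 2) : Partition' := if j = 0 then l.1 else l.2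

/-- Membership of a box in the Young diagram of a bipartition. -/
def MemY (l : Bipartition) (b : Box) : Prop := b.2.1 < (l.partsOf b.2.2).parts b.1

/-- The entry of the charge `σ` corresponding to component `j`. -/
def chargeOf (σ : ℤ × ℤ) (j : Fin 2) : ℤ := if j = 0 then σ.1 else σ.2

/-- The charged content `co^σ(b) = y - x + σ_j` of a box. -/
def content (σ : ℤ × ℤ) (b : Box) : ℤ := (b.2.1 : ℤ) - (b.1 : ℤ) + chargeOf σ b.2.2

/-- `j(b) ∈ {1,2}`: the component of a box, numbered 1 or 2. -/
def jval (b : Box) : ℕ := (b.2.2 : ℕ) + 1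

/-- The counting function of the Dunkl–Griffeth order. -/
def dgCount (l : Bipartition) (s : ℤ × ℤ) (d : ℕ) (α : ℝ) (j : ℕ) : ℕ :=
  Nat.card {b : Box // MemY l b ∧
    (α < (content s b : ℝ) - (jval b : ℝ) * (d : ℝ) / 2 ∨
      ((content s b : ℝ) - (jval b : ℝ) * (d : ℝ) / 2 = α ∧ jval b ≤ j))}

/-- The Dunkl–Griffeth order `λ ⪯_s μ` (with respect to `d`). -/
def DGLE (l m : Bipartition) (s : ℤ × ℤ) (d : ℕ) : Prop :=
  ∀ (α : ℝ), ∀ j ∈ ({1, 2} : Set ℕ), dgCount l s d α j ≤ dgCount m s d α j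

/-- A box of the extended Young diagram: rows are infinite to the left, so the column
coordinate is an integer.  `(x, y, j)` is the box in (0-indexed) row `x`, with integer
column coordinate `y` (`y = 0` is the first column), in component `j`. -/
abbrev ExtBox := ℕ × ℤ × Fin 2

/-- Membership in the extended Young diagram of a bipartition. -/
def MemExtY (l : Bipartition) (b : ExtBox) : Prop :=
  b.2.1 < ((l.partsOf b.2.2).parts b.1 : ℤ)

/-- The charged content of an extended box. -/
def contentExt (σ : ℤ × ℤ) (b : ExtBox) : ℤ := b.2.1 - (b.1 : ℤ) + chargeOf σ b.2.2

/-- `b` is a removable box of the bipartition `l`. -/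
def Removable (l : Bipartition) (b : Box) : Prop :=
  (l.partsOf b.2.2).parts b.1 = b.2.1 + 1 ∧ (l.partsOf b.2.2).parts (b.1 + 1) ≤ b.2.1

/-- `b` is an addable box of the bipartition `l`. -/
def Addable (l : Bipartition) (b : Box) : Prop :=
  (l.partsOf b.2.2).parts b.1 = b.2.1 ∧
    (b.1 = 0 ∨ b.2.1 + 1 ≤ (l.partsOf b.2.2).parts (b.1 - 1))

/-- The order in which boxes are listed in the `i`-word: increasing charged content,
a component-2 box preceding a component-1 box of equal charged content. -/
def BoxLT (σ : ℤ × ℤ) (b b' : Box) : Prop :=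
  content σ b < content σ b' ∨
    (content σ b = content σ b' ∧ b.2.2 = 1 ∧ b'.2.2 = 0)

/-- `L` is the list of boxes underlying the `i`-word of `(l, σ)` with respect to `d`:
it lists, in increasing order, exactly the addable and removable boxes of `l` whose
charged content is congruent to `i` modulo `d`. -/
def IsIWord (l : Bipartition) (σ : ℤ × ℤ) (d : ℕ) (i : ZMod d) (L : List Box) : Prop :=
  L.Pairwise (BoxLT σ) ∧
    ∀ b : Box, b ∈ L ↔ ((Addable l b ∨ Removable l b) ∧ ((content σ b : ZMod d) = i))

/-- The sign of a box in the `i`-word: `true` (`+`) for addable, `false` (`−`) for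
removable boxes. -/
def signOf (l : Bipartition) (b : Box) : Bool := if Addable l b then true else false

/-- One reduction step on words: delete an adjacent pair `−+`. -/
def RedStep (w w' : List Bool) : Prop :=
  ∃ u v : List Bool, w = u ++ false :: true :: v ∧ w' = u ++ v

/-- `ẽ_i l = 0`: the reduced `i`-word of `(l, σ)` contains no `−`, i.e. the `i`-word
reduces to a word consisting only of `+`'s. -/
def AnnihilatedE (l : Bipartition) (σ : ℤ × ℤ) (d : ℕ) (i : ZMod d) : Prop :=
  ∃ L : List Box, IsIWord l σ d i L ∧
    ∃ a : ℕ, Relation.ReflTransGen RedStep (L.map (signOf l)) (List.replicate a true)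

/-- `q` is obtained from the partition `p` by adding one box. -/
def PCovers (p q : Partition') : Prop :=
  ∃ x : ℕ, q.parts x = p.parts x + 1 ∧ ∀ y : ℕ, y ≠ x → q.parts y = p.parts y

/-- `m` is obtained from the bipartition `l` by adding one box to its Young diagram. -/
def BipCovers (l m : Bipartition) : Prop :=
  (PCovers l.1 m.1 ∧ m.2 = l.2) ∨ (m.1 = l.1 ∧ PCovers l.2 m.2)

/-- `A(l) = Σ_μ μ`, the sum over all bipartitions obtained from `l` by adding one box,
as an element of the group of `ℤ`-valued functions on bipartitions. -/
def addB (l : Bipartition) : Bipartition → ℤ := fun m => if BipCovers l m then 1 else 0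

/-- The projection `π_S` onto the span of the bipartitions lying in `S`. -/
def projS (S : Set Bipartition) (f : Bipartition → ℤ) : Bipartition → ℤ :=
  fun m => if m ∈ S then f m else 0

/-- The basis element of `ℤ[BP]` corresponding to a bipartition. -/
def deltaB (l : Bipartition) : Bipartition → ℤ := fun m => if m = l then 1 else 0

/-- The bipartitions of `2n` labelling the principal-series unipotent characters in
the principal `Φ_{2n}`-block. -/
def PS (n : ℕ) : Set Bipartition :=
  {l | (∃ i j : ℕ, 0 < i ∧ i < n ∧ j ≤ n ∧
          l = bip (hook (n - i) j) (hook (n - j + 1) (i - 1))) ∨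
       (∃ j : ℕ, j < 2 * n ∧ l = bip (hook (2 * n - j) j) 0) ∨
       (∃ i : ℕ, 0 < i ∧ i ≤ 2 * n ∧ l = bip 0 (hook (2 * n - i + 1) (i - 1)))}

/-- The bipartitions of `2n-2` labelling the `B₂`-series unipotent characters in the
principal `Φ_{2n}`-block: `2^i 1^{j-i-1} . (n-i-1)(n-j)` for `0 ≤ i < j ≤ n`. -/
def LB2 (n : ℕ) : Set Bipartition :=
  {l | ∃ i j : ℕ, i < j ∧ j ≤ n ∧
        l = bip (Multiset.replicate i 2 + Multiset.replicate (j - i - 1) 1)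
                {n - i - 1, n - j}}

/-- The bipartitions of `2n-6` labelling the `B₆`-series unipotent characters in the
principal `Φ_{2n}`-block: `(n-i-2)(n-j-1) . 2^{i-1} 1^{j-i-1}` for `0 < i < j < n`. -/
def LB6 (n : ℕ) : Set Bipartition :=
  {l | ∃ i j : ℕ, 0 < i ∧ i < j ∧ j < n ∧
        l = bip {n - i - 2, n - j - 1}
                (Multiset.replicate (i - 1) 2 + Multiset.replicate (j - i - 1) 1)}

end

/-! Take `α = ϖ'_i`. Truncating at level `α` can only increase the partial sum
`Σ_{k ≤ i} (ϖ_k - α)`, while for the non-increasing `ϖ'` the truncated sum equals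
`Σ_{k ≤ i} (ϖ'_k - α)`, since the further terms with `ϖ'_k ≥ α` vanish. Comparing the two
and cancelling `i α` gives the inequality of partial sums. -/

theorem sum_sub_le_sum_upperLevel_sub {ι β : Type*} [AddCommGroup β] [LinearOrder β]
    [IsOrderedAddMonoid β] (f : ι → β) (α : β) (hf : {k | α ≤ f k}.Finite)
    (t : Finset ι) : ∑ k ∈ t, (f k - α) ≤ ∑ k ∈ hf.toFinset, (f k - α) := by
  classical
  have below_nonpos : ∑ k ∈ t with ¬ α ≤ f k, (f k - α) ≤ 0 :=
    Finset.sum_nonpos fun k hk => sub_nonpos.2 (not_le.1 (Finset.mem_filter.1 hk).2).le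
  calc ∑ k ∈ t, (f k - α)
      = ∑ k ∈ t with α ≤ f k, (f k - α) + ∑ k ∈ t with ¬ α ≤ f k, (f k - α) :=
        (Finset.sum_filter_add_sum_filter_not t _ _).symm
    _ ≤ ∑ k ∈ t with α ≤ f k, (f k - α) := add_le_of_nonpos_right below_nonpos
    _ ≤ ∑ k ∈ hf.toFinset, (f k - α) :=
        Finset.sum_le_sum_of_subset_of_nonneg
          (fun k hk => hf.mem_toFinset.2 (Finset.mem_filter.1 hk).2)
          (fun k hk _ => sub_nonneg.2 (hf.mem_toFinset.1 hk))

theorem Antitone.sum_upperLevel_sub_eq_sum_range {β : Type*} [AddCommGroup β] [PartialOrder β]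
    {g : ℕ → β} (hg : Antitone g) (i : ℕ) (hs : {k | g i ≤ g k}.Finite) :
    ∑ k ∈ hs.toFinset, (g k - g i) = ∑ k ∈ Finset.range (i + 1), (g k - g i) := by
  refine (Finset.sum_subset (fun k hk => hs.mem_toFinset.2 ?_) fun k hk hki => ?_).symm
  · exact hg (Nat.lt_succ_iff.1 (Finset.mem_range.1 hk))
  · have hik : i ≤ k := Nat.le_of_succ_le (not_lt.1 (mt Finset.mem_range.2 hki))
    rw [le_antisymm (hg hik) (hs.mem_toFinset.1 hk), sub_self]

theorem decomposition_numbers_stmt2_general (f g : ℕ → ℤ) (hg : Antitone g)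
    (hff : ∀ α : ℤ, {k : ℕ | α ≤ f k}.Finite) (hgf : ∀ α : ℤ, {k : ℕ | α ≤ g k}.Finite)
    (h : ∀ α : ℤ, ∑ k ∈ (hff α).toFinset, (f k - α) ≤ ∑ k ∈ (hgf α).toFinset, (g k - α)) :
    ∀ i : ℕ, 1 ≤ i → ∑ k ∈ Finset.range i, f k ≤ ∑ k ∈ Finset.range i, g k := by
  intro i hi
  obtain ⟨i, rfl⟩ := Nat.exists_eq_add_of_le' hi
  have truncated :=
    (sum_sub_le_sum_upperLevel_sub f (g i) (hff (g i)) (Finset.range (i + 1))).trans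
      ((h (g i)).trans_eq (hg.sum_upperLevel_sub_eq_sum_range i (hgf (g i))))
  simpa only [Finset.sum_sub_distrib, sub_le_sub_iff_right] using truncated

/-- If two non-increasing integer sequences with finite upper level
sets satisfy `Σ_{ϖ_k ≥ α} (ϖ_k - α) ≤ Σ_{ϖ'_k ≥ α} (ϖ'_k - α)` for all `α ∈ ℤ`, then all
partial sums of the first are bounded by those of the second. -/
theorem decomposition_numbers_stmt2 (f g : ℕ → ℤ) (hf : Antitone f) (hg : Antitone g)
    (hff : ∀ α : ℤ, {k : ℕ | α ≤ f k}.Finite) (hgf : ∀ α : ℤ, {k : ℕ | α ≤ g k}.Finite)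
    (h : ∀ α : ℤ, ∑ k ∈ (hff α).toFinset, (f k - α) ≤ ∑ k ∈ (hgf α).toFinset, (g k - α)) :
    ∀ i : ℕ, 1 ≤ i → ∑ k ∈ Finset.range i, f k ≤ ∑ k ∈ Finset.range i, g k :=
  decomposition_numbers_stmt2_general f g hg hff hgf h
end

section
/- Let n ≥ 3. A bipartition λ of 2n−6 has the property that its symbol of charge σ₂ = (2,−3) has n-co-core equal to the trivial symbol if and only if λ = (n−i−2)(n−j−1).2^{i−1}1^{j−i−1} for some 0 < i < j < n. There are exactly (n−1)(n−2)/2 such bipartitions. -/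
open scoped Classical

/-!
Everything is controlled by the weight of a β-set `S`, the sum of `|z|` over the symmetric
difference of `S` and `ℤ≤0`. Removing an `n`-co-hook lowers the total weight of a symbol by
exactly `n`; the symbol of `λ` with charge `σ_t` has weight `|λ| + t(t+1)`, which is `2n` for
`|λ| = 2n - 6` and `t = 2`, while the trivial symbol has weight `0`. So the co-core is trivial
exactly when two co-hook removals reach the trivial symbol. Undoing two removals from the trivial
symbol gives four shapes, and only one of them has the two positive entries that the first row of
a symbol of charge `2` always has: `({x+n, y+n} ∪ ℤ≤0, ℤ≤-1 \ {x, y})`, which is the symbol of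
`(n-i-2)(n-j-1).2^{i-1}1^{j-i-1}` for `x = -i`, `y = -j`. Counting pairs `0 < i < j < n` gives
`C(n-1, 2)`.
-/

open Set

namespace Partition'

theorem ext {p q : Partition'} (h : p.parts = q.parts) : p = q := by
  cases p; cases q; simpa using h

theorem parts_eq_zero_of_le (p : Partition') {K i : ℕ} (hK : p.parts K = 0) (hi : K ≤ i) :
    p.parts i = 0 :=
  Nat.le_zero.mp (hK ▸ p.antitone' hi)

theorem size_eq_sum_range (p : Partition') {K : ℕ} (hK : p.parts K = 0) :
    p.size = ∑ i ∈ Finset.range K, p.parts i := by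
  rw [size, ← Finset.eventually_constant_sum
      (fun i => p.parts_eq_zero_of_le (Nat.find_spec p.exists_zero)) (le_max_left _ K),
    Finset.eventually_constant_sum (fun i => p.parts_eq_zero_of_le hK) (le_max_right _ K)]

theorem parts_ofMul_of_pairwise {m : Multiset ℕ} {l : List ℕ} (hl : (l : Multiset ℕ) = m)
    (hs : l.Pairwise (· ≥ ·)) (k : ℕ) : (ofMul m).parts k = l.getD k 0 := by
  have hsort : m.sort (· ≤ ·) = l.reverse := by
    rw [← hl, ← Multiset.coe_reverse, Multiset.coe_sort]
    exact List.mergeSort_eq_self _ (by simpa [List.pairwise_reverse] using hs)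
  show ((m.sort (· ≤ ·)).reverse).getD k 0 = _
  rw [hsort, List.reverse_reverse]

theorem parts_ofMul_pair {a b : ℕ} (hba : b ≤ a) (k : ℕ) :
    (ofMul {a, b}).parts k = if k = 0 then a else if k = 1 then b else 0 := by
  rw [parts_ofMul_of_pairwise (m := {a, b}) (l := [a, b]) rfl (by simpa using hba)]
  rcases k with _ | _ | k <;> rfl

theorem parts_ofMul_two_one (a b k : ℕ) :
    (ofMul (Multiset.replicate a 2 + Multiset.replicate b 1)).parts k =
      if k < a then 2 else if k < a + b then 1 else 0 := by
  rw [parts_ofMul_of_pairwise (l := List.replicate a 2 ++ List.replicate b 1)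
    (by rw [← Multiset.coe_add]; rfl)]
  · simp only [List.getD_eq_getElem?_getD, List.getElem?_append, List.getElem?_replicate,
      List.length_replicate]
    split_ifs <;> simp only [Option.getD_some, Option.getD_none] <;> omega
  · simp [List.pairwise_append, List.pairwise_replicate]

end Partition'

theorem betaSet_strictAnti (p : Partition') (s : ℤ) : StrictAnti (betaSet p s) := by
  refine strictAnti_nat_of_succ_lt fun k => ?_
  have := p.antitone' (Nat.le_add_right k 1)
  simp only [betaSet]
  push_cast
  omega

theorem range_betaSet_injective (s : ℤ) :
    Function.Injective fun p : Partition' => range (betaSet p s) := by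
  intro p q h
  -- `betaSet p s` is strictly monotone as a map into `ℤᵒᵈ`, whose domain `ℕ` is well-founded.
  have hpq := (StrictMono.range_inj (γ := ℤᵒᵈ) (betaSet_strictAnti p s)
    (betaSet_strictAnti q s)).mp h
  exact Partition'.ext (funext fun k => by simpa [betaSet] using congrFun hpq k)

theorem symbolOf_injective (σ : ℤ × ℤ) :
    Function.Injective fun l : Bipartition => symbolOf l σ :=
  fun _ _ h => Prod.ext (range_betaSet_injective _ (congrArg Prod.fst h))
    (range_betaSet_injective _ (congrArg Prod.snd h))

theorem range_betaSet_ofMul_pair {a b : ℕ} (hba : b ≤ a) (s : ℤ) :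
    range (betaSet (Partition'.ofMul {a, b}) s) =
      insert (a + s) (insert (b + s - 1) (Iic (s - 2))) := by
  ext z
  simp only [mem_range, mem_insert_iff, mem_Iic, betaSet, Partition'.parts_ofMul_pair hba]
  constructor
  · rintro ⟨k, rfl⟩
    split_ifs <;> push_cast <;> omega
  · rintro (hz | hz | hz)
    exacts [⟨0, by simp [hz]⟩, ⟨1, by simp [hz]⟩, ⟨(s - z).toNat, by split_ifs <;> omega⟩]

theorem range_betaSet_ofMul_two_one (a b : ℕ) (s : ℤ) :
    range (betaSet (Partition'.ofMul (Multiset.replicate a 2 + Multiset.replicate b 1)) s) =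
      Iic (s + 2) \ {s - a + 2, s - a - b + 1} := by
  ext z
  simp only [mem_range, mem_sdiff, mem_insert_iff, mem_singleton_iff, mem_Iic, betaSet,
    Partition'.parts_ofMul_two_one]
  constructor
  · rintro ⟨k, rfl⟩
    split_ifs <;> push_cast <;> omega
  · rintro ⟨hz, hz'⟩
    refine ⟨if s - a + 2 < z then (s + 2 - z).toNat else if s - a - b + 1 < z then
      (s + 1 - z).toNat else (s - z).toNat, ?_⟩
    split_ifs <;> push_cast <;> omega

open scoped symmDiff

def IsBetaSet (S : Set ℤ) : Prop := (S ∆ Iic 0).Finite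

noncomputable def betaWeight (S : Set ℤ) : ℤ := ∑ᶠ z ∈ S ∆ Iic 0, |z|

theorem IsBetaSet.insert {S : Set ℤ} (hS : IsBetaSet S) (x : ℤ) : IsBetaSet (insert x S) :=
  (Set.Finite.insert x hS).subset fun z => by grind

theorem IsBetaSet.sdiff_singleton {S : Set ℤ} (hS : IsBetaSet S) (x : ℤ) : IsBetaSet (S \ {x}) :=
  (Set.Finite.insert x hS).subset fun z => by grind

theorem betaWeight_nonneg (S : Set ℤ) : 0 ≤ betaWeight S :=
  finsum_nonneg fun z => finsum_nonneg fun _ => abs_nonneg z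

theorem betaWeight_insert {S : Set ℤ} (hS : IsBetaSet S) {x : ℤ} (hx : x ∉ S) :
    betaWeight (insert x S) = betaWeight S + x := by
  unfold betaWeight
  rcases le_or_gt x 0 with h | h
  · have hS' : S ∆ Iic 0 = insert x ((S ∆ Iic 0) \ {x}) := by grind
    have hxS : insert x S ∆ Iic 0 = (S ∆ Iic 0) \ {x} := by grind
    have hsum := finsum_mem_insert (fun z => |z|) (notMem_sdiff_of_mem (mem_singleton x))
      (Set.Finite.sdiff (t := {x}) hS)
    rw [← hS', abs_of_nonpos h] at hsum
    rw [hxS]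
    linarith
  · have hxS : insert x S ∆ Iic 0 = insert x (S ∆ Iic 0) := by grind
    rw [hxS, finsum_mem_insert _ (by grind) hS, abs_of_pos h, add_comm]

theorem betaWeight_sdiff_singleton {S : Set ℤ} (hS : IsBetaSet S) {x : ℤ} (hx : x ∈ S) :
    betaWeight (S \ {x}) = betaWeight S - x := by
  have := betaWeight_insert (hS.sdiff_singleton x) (fun h => h.2 rfl)
  rw [insert_sdiff_singleton, insert_eq_of_mem hx] at this
  linarith

theorem isBetaSet_Iic (m : ℤ) : IsBetaSet (Iic m) :=
  (finite_Icc (min m 0) (max m 0)).subset fun z => by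
    simp only [mem_symmDiff, mem_Iic, mem_Icc]; omega

theorem two_mul_betaWeight_Iic (m : ℤ) : 2 * betaWeight (Iic m) = m * (m + 1) := by
  have hsucc (k : ℤ) : Iic (k + 1) = insert (k + 1) (Iic k) := by
    ext z; simp only [mem_insert_iff, mem_Iic]; omega
  have hstep (k : ℤ) : betaWeight (Iic (k + 1)) = betaWeight (Iic k) + (k + 1) := by
    rw [hsucc, betaWeight_insert (isBetaSet_Iic k) (by simp)]
  induction m using Int.induction_on with
  | zero => simp [betaWeight]
  | succ k ih => rw [hstep]; linear_combination ih
  | pred k ih =>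
    have := hstep (-k - 1)
    rw [sub_add_cancel] at this
    linear_combination ih - 2 * this

theorem isBetaSet_coe_union_Iic (F : Finset ℤ) (m : ℤ) : IsBetaSet (↑F ∪ Iic m) := by
  induction F using Finset.induction_on with
  | empty => simpa using isBetaSet_Iic m
  | insert a F _ ih => simpa [insert_union] using ih.insert a

theorem betaWeight_coe_union_Iic {F : Finset ℤ} {m : ℤ} (hF : ∀ z ∈ F, m < z) :
    betaWeight (↑F ∪ Iic m) = betaWeight (Iic m) + ∑ z ∈ F, z := by
  induction F using Finset.induction_on with
  | empty => simp
  | insert a F ha ih =>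
    have haF : a ∉ (↑F ∪ Iic m : Set ℤ) := by
      simpa [ha] using hF a (Finset.mem_insert_self a F)
    rw [Finset.coe_insert, insert_union, betaWeight_insert (isBetaSet_coe_union_Iic F m) haF,
      ih fun z hz => hF z (Finset.mem_insert_of_mem hz), Finset.sum_insert ha]
    ring

theorem range_betaSet_eq {p : Partition'} {K : ℕ} (hK : p.parts K = 0) (s : ℤ) :
    range (betaSet p s) = ↑((Finset.range K).image (betaSet p s)) ∪ Iic (s - K) := by
  have htail {i : ℕ} (hi : K ≤ i) : betaSet p s i = s - i := by
    simp [betaSet, p.parts_eq_zero_of_le hK hi]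
  ext z
  simp only [mem_range, Finset.coe_image, Finset.coe_range, mem_union, mem_image, mem_Iio, mem_Iic]
  constructor
  · rintro ⟨i, rfl⟩
    rcases lt_or_ge i K with hi | hi
    · exact Or.inl ⟨i, hi, rfl⟩
    · right; rw [htail hi]; omega
  · rintro (⟨i, -, rfl⟩ | hz)
    · exact ⟨i, rfl⟩
    · exact ⟨(s - z).toNat, by rw [htail (by omega)]; omega⟩

theorem isBetaSet_range_betaSet (p : Partition') (s : ℤ) : IsBetaSet (range (betaSet p s)) := by
  obtain ⟨K, hK⟩ := p.exists_zero
  rw [range_betaSet_eq hK]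
  exact isBetaSet_coe_union_Iic _ _

theorem two_mul_betaWeight_range_betaSet (p : Partition') (s : ℤ) :
    2 * betaWeight (range (betaSet p s)) = 2 * p.size + s * (s + 1) := by
  obtain ⟨K, hK⟩ := p.exists_zero
  have hgt : ∀ z ∈ (Finset.range K).image (betaSet p s), s - K < z := by
    simp only [Finset.mem_image, Finset.mem_range]
    rintro _ ⟨i, hi, rfl⟩
    have := betaSet_strictAnti p s hi
    simp only [betaSet, hK] at this ⊢
    omega
  have hsum : ∑ i ∈ Finset.range K, betaSet p s i =
      p.size + ∑ i ∈ Finset.range K, (s - i) := by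
    rw [p.size_eq_sum_range hK]
    push_cast
    rw [← Finset.sum_add_distrib]
    exact Finset.sum_congr rfl fun i _ => by simp only [betaSet]; ring
  have harith (k : ℕ) : 2 * ∑ i ∈ Finset.range k, (s - i) = k * (2 * s - k + 1) := by
    induction k with
    | zero => simp
    | succ k ih => rw [Finset.sum_range_succ, mul_add, ih]; push_cast; ring
  rw [range_betaSet_eq hK, betaWeight_coe_union_Iic hgt,
    Finset.sum_image fun i _ j _ h => (betaSet_strictAnti p s).injective h]
  have := two_mul_betaWeight_Iic (s - K)
  linear_combination this + 2 * hsum + harith K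

def IsBetaSymbol (Λ : Set ℤ × Set ℤ) : Prop := IsBetaSet Λ.1 ∧ IsBetaSet Λ.2

noncomputable def symbolWeight (Λ : Set ℤ × Set ℤ) : ℤ := betaWeight Λ.1 + betaWeight Λ.2

theorem symbolWeight_nonneg (Λ : Set ℤ × Set ℤ) : 0 ≤ symbolWeight Λ :=
  add_nonneg (betaWeight_nonneg _) (betaWeight_nonneg _)

theorem trivialSymbol_eq : trivialSymbol = (Iic 0, Iic (-1)) := rfl

theorem symbolWeight_trivialSymbol : symbolWeight trivialSymbol = 0 := by
  have h0 := two_mul_betaWeight_Iic 0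
  have h1 := two_mul_betaWeight_Iic (-1)
  rw [trivialSymbol_eq, symbolWeight]
  linarith

theorem isBetaSymbol_symbolOf (l : Bipartition) (σ : ℤ × ℤ) : IsBetaSymbol (symbolOf l σ) :=
  ⟨isBetaSet_range_betaSet _ _, isBetaSet_range_betaSet _ _⟩

theorem symbolWeight_symbolOf_sigmaT (l : Bipartition) (t : ℕ) :
    symbolWeight (symbolOf l (sigmaT t)) = l.size + t * (t + 1) := by
  have h1 := two_mul_betaWeight_range_betaSet l.1
  have h2 := two_mul_betaWeight_range_betaSet l.2
  rw [symbolWeight, symbolOf, Bipartition.size, sigmaT]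
  push_cast
  split_ifs <;> linarith [h1 t, h2 (-1 - t), h1 (-1 - t), h2 t]

namespace CohookStep

variable {n : ℕ} {Λ Λ' : Set ℤ × Set ℤ}

theorem isBetaSymbol (h : CohookStep n Λ Λ') (hΛ : IsBetaSymbol Λ) : IsBetaSymbol Λ' := by
  rcases h with ⟨x, -, -, rfl⟩ | ⟨x, -, -, rfl⟩
  · exact ⟨union_singleton (a := x) ▸ hΛ.2.insert x, hΛ.1.sdiff_singleton _⟩
  · exact ⟨hΛ.2.sdiff_singleton _, union_singleton (a := x) ▸ hΛ.1.insert x⟩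

theorem symbolWeight_add (h : CohookStep n Λ Λ') (hΛ : IsBetaSymbol Λ) :
    symbolWeight Λ' + n = symbolWeight Λ := by
  rcases h with ⟨x, hx, hx', rfl⟩ | ⟨x, hx, hx', rfl⟩
  · rw [symbolWeight, symbolWeight, union_singleton, betaWeight_insert hΛ.2 hx',
      betaWeight_sdiff_singleton hΛ.1 hx]
    ring
  · rw [symbolWeight, symbolWeight, union_singleton, betaWeight_insert hΛ.1 hx',
      betaWeight_sdiff_singleton hΛ.2 hx]
    ring

end CohookStep

theorem eq_of_reflTransGen_of_symbolWeight_eq_zero {n : ℕ} (hn : 0 < n) {C D : Set ℤ × Set ℤ}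
    (hC : IsBetaSymbol C) (hw : symbolWeight C = 0)
    (h : Relation.ReflTransGen (CohookStep n) C D) : C = D := by
  rcases h.cases_head with rfl | ⟨C', hC', -⟩
  · rfl
  · have := hC'.symbolWeight_add hC
    have := symbolWeight_nonneg C'
    omega

theorem exists_cohookStep_cohookStep_trivialSymbol {n : ℕ} (hn : 0 < n) {Λ : Set ℤ × Set ℤ}
    (hΛ : IsBetaSymbol Λ) (hw : symbolWeight Λ = 2 * n)
    (h : Relation.ReflTransGen (CohookStep n) Λ trivialSymbol) :
    ∃ Λ₁, CohookStep n Λ Λ₁ ∧ CohookStep n Λ₁ trivialSymbol := by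
  have hT := symbolWeight_trivialSymbol
  rcases h.cases_head with rfl | ⟨Λ₁, h₁, h₁'⟩
  · omega
  have hw₁ := h₁.symbolWeight_add hΛ
  rcases h₁'.cases_head with rfl | ⟨Λ₂, h₂, h₂'⟩
  · omega
  have hw₂ := h₂.symbolWeight_add (h₁.isBetaSymbol hΛ)
  obtain rfl := eq_of_reflTransGen_of_symbolWeight_eq_zero hn
    (h₂.isBetaSymbol (h₁.isBetaSymbol hΛ)) (by omega) h₂'
  exact ⟨Λ₁, h₁, h₂⟩

theorem cohookStep_iff {n : ℕ} {Λ Λ' : Set ℤ × Set ℤ} :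
    CohookStep n Λ Λ' ↔
      (∃ x, x ∈ Λ'.1 ∧ x + n ∉ Λ'.2 ∧ Λ = (insert (x + n) Λ'.2, Λ'.1 \ {x})) ∨
      (∃ x, x ∈ Λ'.2 ∧ x + n ∉ Λ'.1 ∧ Λ = (Λ'.2 \ {x}, insert (x + n) Λ'.1)) := by
  obtain ⟨X, Y⟩ := Λ
  obtain ⟨X', Y'⟩ := Λ'
  simp only [CohookStep, Prod.mk.injEq]
  apply or_congr <;> apply exists_congr <;> intro x <;> constructor <;> grind

theorem not_cohookStep_trivialSymbol {n : ℕ} (hn : 0 < n) (Λ : Set ℤ × Set ℤ) :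
    ¬ CohookStep n trivialSymbol Λ := by
  rintro (⟨x, hx, hx', -⟩ | ⟨x, hx, hx', -⟩) <;>
    simp only [trivialSymbol_eq, mem_Iic] at hx hx' <;> omega

-- Removing the `n`-co-hooks `(x, x + n)` and then `(y, y + n)` leaves the trivial symbol.
def twoCohookSymbol (n : ℕ) (x y : ℤ) : Set ℤ × Set ℤ :=
  (insert (x + n) (insert (y + n) (Iic 0)), (Iic (-1) \ {y}) \ {x})

theorem twoCohookSymbol_comm (n : ℕ) (x y : ℤ) :
    twoCohookSymbol n x y = twoCohookSymbol n y x := by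
  rw [twoCohookSymbol, twoCohookSymbol, insert_comm, sdiff_sdiff_comm]

section twoCohookSymbol

variable {n : ℕ} {x y : ℤ}

theorem symbolWeight_twoCohookSymbol (hy : -n < y) (hyx : y < x) (hx : x < 0) :
    symbolWeight (twoCohookSymbol n x y) = 2 * n := by
  have h₀ := two_mul_betaWeight_Iic 0
  have h₁ := two_mul_betaWeight_Iic (-1)
  have hI₀ := isBetaSet_Iic 0
  have hI₁ := isBetaSet_Iic (-1)
  rw [symbolWeight, twoCohookSymbol, betaWeight_insert (hI₀.insert _), betaWeight_insert hI₀,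
    betaWeight_sdiff_singleton (hI₁.sdiff_singleton _), betaWeight_sdiff_singleton hI₁]
  · linarith
  all_goals simp only [mem_insert_iff, mem_sdiff, mem_singleton_iff, mem_Iic]; omega

theorem isCocore_twoCohookSymbol (hy : -n < y) (hyx : y < x) (hx : x < 0) :
    IsCocore n (twoCohookSymbol n x y) trivialSymbol := by
  have h₂ : CohookStep n (Iic (-1) \ {y}, insert (y + n) (Iic 0)) trivialSymbol := by
    rw [cohookStep_iff, trivialSymbol_eq]
    refine Or.inr ⟨y, ?_, ?_, rfl⟩ <;> simp only [mem_Iic] <;> omega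
  have h₁ : CohookStep n (twoCohookSymbol n x y) (Iic (-1) \ {y}, insert (y + n) (Iic 0)) := by
    rw [cohookStep_iff]
    refine Or.inl ⟨x, ?_, ?_, rfl⟩ <;>
      simp only [mem_insert_iff, mem_sdiff, mem_singleton_iff, mem_Iic] <;> omega
  exact ⟨.head h₁ (.single h₂), not_cohookStep_trivialSymbol (by omega)⟩

end twoCohookSymbol

theorem exists_eq_twoCohookSymbol_of_reflTransGen {n : ℕ} (hn : 0 < n) {Λ : Set ℤ × Set ℤ}
    (hΛ : IsBetaSymbol Λ) (hw : symbolWeight Λ = 2 * n)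
    (hrow : ∀ c, ¬ Λ.1 ⊆ insert c (Iic 0))
    (h : Relation.ReflTransGen (CohookStep n) Λ trivialSymbol) :
    ∃ x y : ℤ, -n < y ∧ y < x ∧ x < 0 ∧ Λ = twoCohookSymbol n x y := by
  obtain ⟨Λ₁, h₁, h₂⟩ := exists_cohookStep_cohookStep_trivialSymbol hn hΛ hw h
  rw [cohookStep_iff] at h₁ h₂
  rw [trivialSymbol_eq] at h₂
  rcases h₂ with ⟨y, -, -, rfl⟩ | ⟨y, hy, hyn, rfl⟩
  · rcases h₁ with ⟨x, -, -, rfl⟩ | ⟨x, -, -, rfl⟩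
    · exact absurd (insert_subset_insert sdiff_subset) (hrow (x + n))
    · exact absurd (sdiff_subset.trans (sdiff_subset.trans (subset_insert 0 _))) (hrow 0)
  · rcases h₁ with ⟨x, hx, hxn, rfl⟩ | ⟨x, -, -, rfl⟩
    · simp only [mem_sdiff, mem_Iic, mem_singleton_iff, mem_insert_iff] at hx hxn hy hyn
      rcases lt_or_gt_of_ne hx.2 with hxy | hxy
      · exact ⟨y, x, by omega, hxy, by omega, twoCohookSymbol_comm n x y⟩
      · exact ⟨x, y, by omega, hxy, by omega, rfl⟩
    · exact absurd sdiff_subset (hrow (y + n))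

theorem sigmaT_two : sigmaT 2 = (2, -3) := by
  simp [sigmaT]

theorem range_betaSet_two_not_subset_insert_Iic (p : Partition') (c : ℤ) :
    ¬ range (betaSet p 2) ⊆ insert c (Iic 0) := by
  intro h
  have h0 := h (mem_range_self 0)
  have h1 := h (mem_range_self 1)
  have hp := p.antitone' zero_le_one
  simp only [mem_insert_iff, mem_Iic, betaSet] at h0 h1
  omega

def b6Bipartition (n : ℕ) (p : ℕ × ℕ) : Bipartition :=
  bip {n - p.1 - 2, n - p.2 - 1}
    (Multiset.replicate (p.1 - 1) 2 + Multiset.replicate (p.2 - p.1 - 1) 1)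

def b6Indices (n : ℕ) : Finset (ℕ × ℕ) :=
  {p ∈ Finset.Ioo 0 n ×ˢ Finset.Ioo 0 n | p.1 < p.2}

theorem mem_b6Indices {n : ℕ} {p : ℕ × ℕ} :
    p ∈ b6Indices n ↔ 0 < p.1 ∧ p.1 < p.2 ∧ p.2 < n := by
  simp only [b6Indices, Finset.mem_filter, Finset.mem_product, Finset.mem_Ioo]
  omega

theorem LB6_eq_image (n : ℕ) : LB6 n = b6Bipartition n '' b6Indices n := by
  ext l
  simp only [LB6, mem_ofPred_eq, mem_image, Finset.mem_coe, mem_b6Indices, Prod.exists]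
  exact exists₂_congr fun i j => by rw [b6Bipartition]; tauto

theorem card_b6Indices (n : ℕ) : (b6Indices n).card = (n - 1) * (n - 2) / 2 := by
  rw [b6Indices, Finset.card_product_filter_lt, Nat.card_Ioo, Nat.choose_two_right]
  rfl

theorem b6Bipartition_injOn (n : ℕ) : InjOn (b6Bipartition n) (b6Indices n) := by
  rintro ⟨i, j⟩ hij ⟨i', j'⟩ hij' h
  rw [Finset.mem_coe, mem_b6Indices] at hij hij'
  have h0 := congrArg (fun l : Bipartition => l.1.parts 0) h
  have h1 := congrArg (fun l : Bipartition => l.1.parts 1) h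
  simp only [b6Bipartition, bip, ↓reduceIte, one_ne_zero,
    Partition'.parts_ofMul_pair (show n - j - 1 ≤ n - i - 2 by omega),
    Partition'.parts_ofMul_pair (show n - j' - 1 ≤ n - i' - 2 by omega)] at h0 h1
  rw [Prod.mk.injEq]
  omega

theorem symbolOf_b6Bipartition {n i j : ℕ} (hij : (i, j) ∈ b6Indices n) :
    symbolOf (b6Bipartition n (i, j)) (sigmaT 2) = twoCohookSymbol n (-i) (-j) := by
  rw [mem_b6Indices] at hij
  rw [sigmaT_two, symbolOf, b6Bipartition, bip, twoCohookSymbol]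
  dsimp only
  rw [range_betaSet_ofMul_pair (by omega), range_betaSet_ofMul_two_one]
  congr 1
  · ext z; simp only [mem_insert_iff, mem_Iic]; omega
  · ext z; simp only [mem_sdiff, mem_insert_iff, mem_singleton_iff, mem_Iic]; omega

theorem mem_LB6_iff {n : ℕ} {l : Bipartition} :
    l ∈ LB6 n ↔ ∃ x y : ℤ, -n < y ∧ y < x ∧ x < 0 ∧
      symbolOf l (sigmaT 2) = twoCohookSymbol n x y := by
  rw [LB6_eq_image]
  constructor
  · rintro ⟨⟨i, j⟩, hij, rfl⟩
    have := mem_b6Indices.mp hij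
    exact ⟨-i, -j, by omega, by omega, by omega, symbolOf_b6Bipartition hij⟩
  · rintro ⟨x, y, hy, hyx, hx, h⟩
    have hij : ((-x).toNat, (-y).toNat) ∈ b6Indices n := mem_b6Indices.mpr (by omega)
    refine ⟨_, hij, symbolOf_injective (sigmaT 2) ?_⟩
    change symbolOf _ _ = symbolOf _ _
    rw [symbolOf_b6Bipartition hij, h]
    congr <;> omega

theorem setOf_size_isCocore_eq_LB6 {n : ℕ} (hn : 3 ≤ n) :
    {l : Bipartition | l.size = 2 * n - 6 ∧ IsCocore n (symbolOf l (sigmaT 2)) trivialSymbol} =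
      LB6 n := by
  ext l
  have hw : symbolWeight (symbolOf l (sigmaT 2)) = l.size + 6 := symbolWeight_symbolOf_sigmaT l 2
  have hrow (c : ℤ) : ¬ (symbolOf l (sigmaT 2)).1 ⊆ insert c (Iic 0) := by
    rw [sigmaT_two]
    exact range_betaSet_two_not_subset_insert_Iic l.1 c
  rw [mem_ofPred_eq, mem_LB6_iff]
  constructor
  · rintro ⟨hsize, hreach, -⟩
    exact exists_eq_twoCohookSymbol_of_reflTransGen (by omega) (isBetaSymbol_symbolOf l _)
      (by omega) hrow hreach
  · rintro ⟨x, y, hy, hyx, hx, h⟩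
    have := symbolWeight_twoCohookSymbol hy hyx hx
    rw [← h, hw] at this
    exact ⟨by omega, h ▸ isCocore_twoCohookSymbol hy hyx hx⟩

/-- The bipartitions of `2n - 6` whose symbol of charge `σ₂ = (2,-3)`
has `n`-co-core the trivial symbol are exactly the members of `LB6 n`, and there are
exactly `(n-1)(n-2)/2` of them. -/
theorem decomposition_numbers_stmt6 (n : ℕ) (hn : 3 ≤ n) :
    (∀ l : Bipartition, Bipartition.size l = 2 * n - 6 →
        (IsCocore n (symbolOf l (sigmaT 2)) trivialSymbol ↔ l ∈ LB6 n)) ∧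
    {l : Bipartition | Bipartition.size l = 2 * n - 6 ∧
        IsCocore n (symbolOf l (sigmaT 2)) trivialSymbol}.Finite ∧
    {l : Bipartition | Bipartition.size l = 2 * n - 6 ∧
        IsCocore n (symbolOf l (sigmaT 2)) trivialSymbol}.ncard = (n - 1) * (n - 2) / 2 := by
  have hset := setOf_size_isCocore_eq_LB6 hn
  refine ⟨fun l hl => ?_, ?_, ?_⟩
  · rw [← hset, mem_ofPred_eq, and_iff_right hl]
  · rw [hset, LB6_eq_image]
    exact (Finset.finite_toSet _).image _
  · rw [hset, LB6_eq_image, (b6Bipartition_injOn n).ncard_image, ncard_coe_finset,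
      card_b6Indices]
end
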